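/- For the unit vector ψ = (1/√3)·(1, 0, 0, √2) in ℂ⁴ ≅ span of spin-2 Jz eigenstates restricted to components (|2,2⟩, |2,1⟩, |2,0⟩, |2,−1⟩), considered as the spin-2 state |ψ⟩ = (1/√3)|2,2⟩ + (√2/√3)|2,−1⟩, the expectation values ⟨ψ|Jₐ|ψ⟩ vanish for a ∈ {x,y,z}. -/
import Mathlib


open Matrix Complex

/-- Raising operator J₊ for spin 2 in the Jz eigenbasis (|2,2⟩,…,|2,−2⟩),
with matrix elements ⟨2,m+1|J₊|2,m⟩ = √(6 − m(m+1)). -/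
noncomputable def Jplus2 : Matrix (Fin 5) (Fin 5) ℂ :=
  !![0, 2, 0, 0, 0;
     0, 0, Real.sqrt 6, 0, 0;
     0, 0, 0, Real.sqrt 6, 0;
     0, 0, 0, 0, 2;
     0, 0, 0, 0, 0]

noncomputable def Jminus2 : Matrix (Fin 5) (Fin 5) ℂ := Jplus2.transpose

noncomputable def Jx2 : Matrix (Fin 5) (Fin 5) ℂ := (1 / 2 : ℂ) • (Jplus2 + Jminus2)

noncomputable def Jy2 : Matrix (Fin 5) (Fin 5) ℂ := (1 / (2 * I)) • (Jplus2 - Jminus2)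

noncomputable def Jz2 : Matrix (Fin 5) (Fin 5) ℂ := diagonal ![2, 1, 0, -1, -2]

/-- The tetrahedral spin-2 state (1/√3)|2,2⟩ + (√2/√3)|2,−1⟩. -/
noncomputable def psiTet : Fin 5 → ℂ :=
  ![1 / Real.sqrt 3, 0, 0, Real.sqrt 2 / Real.sqrt 3, 0]

lemma Jminus2_eq : Jminus2 = !![(0:ℂ), 0, 0, 0, 0;
     2, 0, 0, 0, 0;
     0, Real.sqrt 6, 0, 0, 0;
     0, 0, Real.sqrt 6, 0, 0;
     0, 0, 0, 2, 0] := by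
  ext i j
  fin_cases i <;> fin_cases j <;> simp [Jminus2, Jplus2, Matrix.vecHead, Matrix.vecTail]

theorem psiTet_anticoherent :
    star psiTet ⬝ᵥ Jx2.mulVec psiTet = 0 ∧
    star psiTet ⬝ᵥ Jy2.mulVec psiTet = 0 ∧
    star psiTet ⬝ᵥ Jz2.mulVec psiTet = 0 := by
  have h2 : ((Real.sqrt 2 : ℝ) : ℂ) * ((Real.sqrt 2 : ℝ) : ℂ) = 2 := by
    rw [← Complex.ofReal_mul, Real.mul_self_sqrt (by norm_num)]; norm_num
  refine ⟨?_, ?_, ?_⟩ <;>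
  · simp [Jx2, Jy2, Jz2, Jplus2, Jminus2_eq, psiTet, dotProduct, mulVec,
      Fin.sum_univ_five, diagonal]
    try ring_nf
    try simp [sq, h2, Matrix.vecHead, Matrix.vecTail]
    try ring_nf
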